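/- arXiv:1511.03504 — 2 statements merged into one kernel-verified Lean document; each statement's English description precedes it below -/
import Mathlib

section
/- Let P^{(n,N)} be the n × N 0-1 matrix (with n ≤ N) defined by P_{i,j} = 0 iff i + j ≤ ⌊n/2⌋ + 1 or i + j ≥ ⌊n/2⌋ + N + 1 (1-based indices). Then the maximum length of a 0-staircase in P^{(n,N)} is ⌈n/2⌉ and the maximum length of a 1-staircase in P^{(n,N)} is N − 1. -/
/-- A step of a staircase: the next position is strictly to the right in the
same row, or strictly below in the same column. -/
def Step {n N : ℕ} (p q : Fin n × Fin N) : Prop :=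
  (p.1 = q.1 ∧ p.2 < q.2) ∨ (p.2 = q.2 ∧ p.1 < q.1)

/-- A `v`-staircase in the 0-1 matrix `M`: a sequence of positions all holding
the value `v`, each successive one strictly to the right in the same row or
strictly below in the same column of the previous one. -/
def IsStaircase {n N : ℕ} (M : Fin n → Fin N → Fin 2) (v : Fin 2)
    (L : List (Fin n × Fin N)) : Prop :=
  (∀ p ∈ L, M p.1 p.2 = v) ∧ L.Chain' Step

/-- The matrix P^(n,N): entry 0 iff i + j ≤ ⌊n/2⌋ + 1 or i + j ≥ ⌊n/2⌋ + N + 1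
(1-based indices). -/
def Pmat (n N : ℕ) : Fin n → Fin N → Fin 2 := fun i j =>
  if (i.1 + 1) + (j.1 + 1) ≤ n / 2 + 1 ∨ n / 2 + N + 1 ≤ (i.1 + 1) + (j.1 + 1)
  then 0 else 1


/-! Along a staircase the antidiagonal index `i + j` (0-based) strictly increases. The ones of
`P^(n,N)` fill the band `n / 2 ≤ i + j ≤ n / 2 + N - 2` of `N - 1` antidiagonals; the zeros form
the two triangles on either side of it, with `n / 2` and `⌈n / 2⌉` antidiagonals. The first
`N - 1` entries of row `n / 2` and the last `⌈n / 2⌉` entries of the last column attain the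
bounds. -/

theorem List.length_le_of_isChain_lt {l : List ℕ} {b : ℕ} (hl : l.IsChain (· < ·))
    (hb : ∀ x ∈ l, x < b) : l.length ≤ b := by
  have hsub : l ⊆ List.range b := fun x hx => List.mem_range.mpr (hb x hx)
  simpa using (List.subperm_of_subset (hl.pairwise.imp Nat.ne_of_lt) hsub).length_le

section Staircase

variable {n N : ℕ}

theorem Step.val_add_lt {p q : Fin n × Fin N} (h : Step p q) :
    p.1.1 + p.2.1 < q.1.1 + q.2.1 := by
  rcases h with ⟨he, hl⟩ | ⟨he, hl⟩ <;> simp only [he, Fin.lt_def] at hl ⊢ <;> omega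

theorem Step.val_add_lt_add {p q : Fin n × Fin N} (h : Step p q) (hnN : n ≤ N) :
    q.1.1 + q.2.1 < p.1.1 + p.2.1 + N := by
  have := q.1.isLt; have := q.2.isLt
  rcases h with ⟨he, -⟩ | ⟨he, -⟩ <;> simp only [he] <;> omega

theorem IsStaircase.length_le {M : Fin n → Fin N → Fin 2} {v : Fin 2}
    {L : List (Fin n × Fin N)} (hL : IsStaircase M v L) (rank : Fin n × Fin N → ℕ) {b : ℕ}
    (hrank : ∀ p q, M p.1 p.2 = v → M q.1 q.2 = v → Step p q → rank p < rank q)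
    (hb : ∀ p, M p.1 p.2 = v → rank p < b) : L.length ≤ b := by
  obtain ⟨hval, hchain⟩ := hL
  have hmono : (L.map rank).IsChain (· < ·) :=
    (List.isChain_map rank).mpr
      (hchain.imp_of_mem_imp fun p q hp hq => hrank p q (hval p hp) (hval q hq))
  simpa using List.length_le_of_isChain_lt hmono
    (List.forall_mem_map.mpr fun p hp => hb p (hval p hp))

theorem isStaircase_map_finRange {m : ℕ} {M : Fin n → Fin N → Fin 2} {v : Fin 2}
    (f : Fin m → Fin n × Fin N) (hval : ∀ k, M (f k).1 (f k).2 = v)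
    (hstep : ∀ k l, k < l → Step (f k) (f l)) :
    IsStaircase M v ((List.finRange m).map f) := by
  refine ⟨by simpa using hval, ?_⟩
  exact (List.isChain_map f).mpr ((List.pairwise_lt_finRange m).isChain.imp fun k l => hstep k l)

end Staircase

section Pmat

variable {n N : ℕ}

theorem Pmat_eq_zero_iff (i : Fin n) (j : Fin N) :
    Pmat n N i j = 0 ↔ i.1 + j.1 < n / 2 ∨ n / 2 + N ≤ i.1 + j.1 + 1 := by
  unfold Pmat
  split_ifs <;> simp only [Fin.isValue, true_iff, one_ne_zero, false_iff] <;> omega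

theorem Pmat_eq_one_iff (i : Fin n) (j : Fin N) :
    Pmat n N i j = 1 ↔ n / 2 ≤ i.1 + j.1 ∧ i.1 + j.1 + 1 < n / 2 + N := by
  unfold Pmat
  split_ifs <;> simp only [Fin.isValue, true_iff, zero_ne_one, false_iff] <;> omega

theorem length_le_of_isStaircase_Pmat_one {L : List (Fin n × Fin N)}
    (hL : IsStaircase (Pmat n N) 1 L) : L.length ≤ N - 1 := by
  refine hL.length_le (fun p => p.1.1 + p.2.1 - n / 2) (fun p q hp hq hpq => ?_) fun p hp => ?_
  · have := (Pmat_eq_one_iff _ _).mp hp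
    have := hpq.val_add_lt
    omega
  · have := (Pmat_eq_one_iff _ _).mp hp
    omega

/- A step raises `i + j` by less than `N`, so a 0-staircase never crosses the band of ones and
each of the two triangles can be ranked by `i + j` separately. -/
theorem length_le_of_isStaircase_Pmat_zero (hnN : n ≤ N) {L : List (Fin n × Fin N)}
    (hL : IsStaircase (Pmat n N) 0 L) : L.length ≤ (n + 1) / 2 := by
  refine hL.length_le
    (fun p => if p.1.1 + p.2.1 < n / 2 then p.1.1 + p.2.1 else p.1.1 + p.2.1 + 1 - (n / 2 + N))
    (fun p q hp hq hpq => ?_) fun p hp => ?_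
  · have := (Pmat_eq_zero_iff _ _).mp hp
    have := (Pmat_eq_zero_iff _ _).mp hq
    have := hpq.val_add_lt
    have := hpq.val_add_lt_add hnN
    split_ifs <;> omega
  · have := (Pmat_eq_zero_iff _ _).mp hp
    have := p.1.isLt; have := p.2.isLt
    split_ifs <;> omega

end Pmat

/-- In P^(n,N) (1 ≤ n ≤ N), the maximum length of a 0-staircase is ⌈n/2⌉ and
the maximum length of a 1-staircase is N − 1. -/
theorem stmt4 (n N : ℕ) (hn : 1 ≤ n) (hnN : n ≤ N) :
    IsGreatest {l : ℕ | ∃ L, IsStaircase (Pmat n N) 0 L ∧ L.length = l} ((n + 1) / 2) ∧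
    IsGreatest {l : ℕ | ∃ L, IsStaircase (Pmat n N) 1 L ∧ L.length = l} (N - 1) := by
  refine ⟨⟨?_, fun l ⟨L, hL, hl⟩ => hl ▸ length_le_of_isStaircase_Pmat_zero hnN hL⟩,
    ⟨?_, fun l ⟨L, hL, hl⟩ => hl ▸ length_le_of_isStaircase_Pmat_one hL⟩⟩
  · refine ⟨_, isStaircase_map_finRange
      (fun k : Fin ((n + 1) / 2) => (⟨n / 2 + k, by omega⟩, ⟨N - 1, by omega⟩))
      (fun k => (Pmat_eq_zero_iff _ _).mpr (by dsimp only; omega))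
      (fun k l hkl => Or.inr ⟨rfl, Fin.mk_lt_mk.mpr (Nat.add_lt_add_left hkl _)⟩),
      by simp only [List.length_map, List.length_finRange]⟩
  · refine ⟨_, isStaircase_map_finRange
      (fun j : Fin (N - 1) => (⟨n / 2, by omega⟩, ⟨j, by omega⟩))
      (fun j => (Pmat_eq_one_iff _ _).mpr (by dsimp only; omega))
      (fun j k hjk => Or.inl ⟨rfl, Fin.mk_lt_mk.mpr hjk⟩),
      by simp only [List.length_map, List.length_finRange]⟩
end

section
/- Let M be an n × n 0-1 matrix with M_{1,n} = 1. Suppose the first row contains a 0 and let a₂ = (1, c) be its rightmost 0; suppose the last column contains a 0 and let a₃ = (r, n) be its topmost 0. If M_{r,c} = 0, then M contains a homogeneous staircase of length at least n − 1. -/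
open Finset

section CardFilter

variable {α : Type*} [Fintype α] {P : α → Prop} [DecidablePred P] {a : α}

theorem card_filter_and_add_one [DecidableEq α] {R : α → Prop} [DecidablePred R] (ha : P a)
    (hR : ∀ b, P b → (R b ↔ b ≠ a)) : #{b | R b ∧ P b} + 1 = #{b | P b} := by
  have herase : univ.filter (fun b => R b ∧ P b) = (univ.filter P).erase a := by
    ext b
    simp only [mem_filter, mem_univ, true_and, mem_erase]
    exact ⟨fun ⟨hRb, hPb⟩ => ⟨(hR b hPb).1 hRb, hPb⟩,
      fun ⟨hne, hPb⟩ => ⟨(hR b hPb).2 hne, hPb⟩⟩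
  rw [herase, card_erase_add_one (by simpa using ha)]

variable [LinearOrder α]

theorem card_filter_lt_add_one (ha : P a) (hmax : ∀ b, a < b → ¬ P b) :
    #{b | b < a ∧ P b} + 1 = #{b | P b} :=
  card_filter_and_add_one ha fun b hb =>
    ⟨ne_of_lt, fun hne => hne.lt_of_le (not_lt.1 (hmax b · hb))⟩

theorem card_filter_gt_add_one (ha : P a) (hmin : ∀ b, b < a → ¬ P b) :
    #{b | a < b ∧ P b} + 1 = #{b | P b} :=
  card_filter_and_add_one ha fun b hb =>
    ⟨ne_of_gt, fun hne => hne.symm.lt_of_le (not_lt.1 (hmin b · hb))⟩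

end CardFilter

theorem card_filter_eq_zero_add_card_filter_eq_one {α : Type*} [Fintype α] (f : α → Fin 2) :
    #{a | f a = 0} + #{a | f a = 1} = Fintype.card α := by
  rw [← card_univ, ← card_filter_add_card_filter_not (s := univ) (fun a => f a = 0)]
  congr 2
  ext a
  simp only [mem_filter, mem_univ, true_and]
  omega

section Staircase

variable {n N : ℕ} {M : Fin n → Fin N → Fin 2} {v : Fin 2}

variable (M v) in
def entriesLeft (p : Fin n × Fin N) : List (Fin n × Fin N) :=
  (sort {j | j < p.2 ∧ M p.1 j = v}).map (p.1, ·)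

variable (M v) in
def entriesBelow (p : Fin n × Fin N) : List (Fin n × Fin N) :=
  (sort {i | p.1 < i ∧ M i p.2 = v}).map (·, p.2)

theorem length_entriesLeft (p : Fin n × Fin N) :
    (entriesLeft M v p).length = #{j | j < p.2 ∧ M p.1 j = v} := by
  simp [entriesLeft]

theorem length_entriesBelow (p : Fin n × Fin N) :
    (entriesBelow M v p).length = #{i | p.1 < i ∧ M i p.2 = v} := by
  simp [entriesBelow]

theorem IsStaircase.cons {i : Fin n} {j : Fin N} {q : Fin n × Fin N}
    {L : List (Fin n × Fin N)} (hq : IsStaircase M v (q :: L)) (hij : M i j = v)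
    (hstep : Step (i, j) q) :
    IsStaircase M v ((i, j) :: q :: L) := by
  refine ⟨?_, List.isChain_cons_cons.mpr ⟨hstep, hq.2⟩⟩
  rintro x (_ | ⟨_, hx⟩)
  exacts [hij, hq.1 x hx]

theorem IsStaircase.entriesLeft_append {p : Fin n × Fin N} {L : List (Fin n × Fin N)}
    (h : IsStaircase M v (p :: L)) : IsStaircase M v (entriesLeft M v p ++ p :: L) := by
  have hmem : ∀ q ∈ entriesLeft M v p, M q.1 q.2 = v ∧ Step q p := by
    simp only [entriesLeft, List.mem_map, mem_sort, mem_filter, mem_univ, true_and]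
    rintro _ ⟨j', ⟨hj', hMj'⟩, rfl⟩
    exact ⟨hMj', Or.inl ⟨rfl, hj'⟩⟩
  refine ⟨fun q hq => ?_, List.isChain_append.mpr ⟨?_, h.2, ?_⟩⟩
  · rcases List.mem_append.mp hq with hq | hq
    exacts [(hmem q hq).1, h.1 q hq]
  · exact (List.isChain_map _).mpr <|
      (sortedLT_sort _).isChain.imp fun _ _ hlt => Or.inl ⟨rfl, hlt⟩
  · rintro q hq _ ⟨⟩
    exact (hmem q (List.mem_of_getLast? hq)).2

theorem isStaircase_cons_entriesBelow {i : Fin n} {j : Fin N} (hij : M i j = v) :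
    IsStaircase M v ((i, j) :: entriesBelow M v (i, j)) := by
  have hmem : ∀ q ∈ entriesBelow M v (i, j), M q.1 q.2 = v ∧ Step (i, j) q := by
    simp only [entriesBelow, List.mem_map, mem_sort, mem_filter, mem_univ, true_and]
    rintro _ ⟨i', ⟨hi', hMi'⟩, rfl⟩
    exact ⟨hMi', Or.inr ⟨rfl, hi'⟩⟩
  refine ⟨?_, List.isChain_cons.mpr ⟨fun q hq => (hmem q (List.mem_of_mem_head? hq)).2, ?_⟩⟩
  · rintro q (_ | ⟨_, hq⟩)
    exacts [hij, (hmem q hq).1]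
  · exact (List.isChain_map _).mpr <|
      (sortedLT_sort _).isChain.imp fun _ _ hlt => Or.inr ⟨rfl, hlt⟩

end Staircase

/-- Let M be an n × n 0-1 matrix with M_(1,n) = 1, let (1,c) be the rightmost 0
of the first row and (r,n) the topmost 0 of the last column. If M_(r,c) = 0,
then M contains a homogeneous staircase of length at least n − 1. -/
theorem stmt10 (n : ℕ) (hn : 0 < n) (M : Fin n → Fin n → Fin 2)
    (h1 : M ⟨0, hn⟩ ⟨n - 1, by omega⟩ = 1)
    (c r : Fin n)
    (hc : M ⟨0, hn⟩ c = 0) (hcmax : ∀ j : Fin n, c < j → M ⟨0, hn⟩ j ≠ 0)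
    (hr : M r ⟨n - 1, by omega⟩ = 0)
    (hrmin : ∀ i : Fin n, i < r → M i ⟨n - 1, by omega⟩ ≠ 0)
    (h4 : M r c = 0) :
    ∃ (v : Fin 2) (L : List (Fin n × Fin n)),
      IsStaircase M v L ∧ n - 1 ≤ L.length := by
  set top : Fin n := ⟨0, hn⟩
  set last : Fin n := ⟨n - 1, by omega⟩
  have htop_lt_r : top < r :=
    lt_of_le_of_ne (Nat.zero_le r.val) fun h => by simp [← h, h1] at hr
  have hc_lt_last : c < last :=
    lt_of_le_of_ne (Nat.le_sub_one_of_lt c.isLt) fun h => by simp [h, h1] at hc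
  set L0 := entriesLeft M 0 (top, c) ++ (top, c) :: (r, c) :: (r, last) ::
    entriesBelow M 0 (r, last)
  set L1 := entriesLeft M 1 (top, last) ++ (top, last) :: entriesBelow M 1 (top, last)
  have hL0 : IsStaircase M 0 L0 :=
    (((isStaircase_cons_entriesBelow hr).cons h4 (Or.inl ⟨rfl, hc_lt_last⟩)).cons hc
      (Or.inr ⟨rfl, htop_lt_r⟩)).entriesLeft_append
  have hL1 : IsStaircase M 1 L1 := (isStaircase_cons_entriesBelow h1).entriesLeft_append
  have hlength : L0.length + L1.length = 2 * n := by
    have hrow0 := card_filter_lt_add_one (P := (M top · = 0)) hc hcmax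
    have hrow1 := card_filter_lt_add_one (P := (M top · = 1)) h1 fun j hj =>
      absurd (Nat.le_sub_one_of_lt j.isLt) (not_le.2 hj)
    have hcol0 := card_filter_gt_add_one (P := (M · last = 0)) hr hrmin
    have hcol1 := card_filter_gt_add_one (P := (M · last = 1)) h1 fun i hi =>
      absurd hi (not_lt.2 (Nat.zero_le i.val))
    have hrow := card_filter_eq_zero_add_card_filter_eq_one (M top)
    have hcol := card_filter_eq_zero_add_card_filter_eq_one (M · last)
    simp only [L0, L1, List.length_append, List.length_cons, length_entriesLeft,
      length_entriesBelow, Fintype.card_fin] at hrow hcol ⊢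
    omega
  rcases le_or_gt n L0.length with hlong | hshort
  exacts [⟨0, L0, hL0, by omega⟩, ⟨1, L1, hL1, by omega⟩]
end
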